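/- Let A ∈ 𝒜_{d,m} and φ_{i,j} be univariate CDFs. For any coordinate k, the limit of F_{A,Φ}(x) as x_k → ∞ equals the MDMA in the remaining d-1 variables whose tensor is obtained from A by summing over the k-th index; in particular marginalization of an MDMA over any subset of variables again yields an MDMA with tensor in 𝒜_{d',m} for d' the number of remaining variables. -/

import Mathlib

/-!
Fix every coordinate except the `k`-th. Each summand of `F` then factors as a constant times
`φ (idx k) k t`, which tends to `1` as `t → ∞`; summing the surviving constants first over the
`k`-th index, as allowed by the splitting `idx ↔ (idx k, idx ∘ k.succAbove)`, gives the MDMA with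
the marginal tensor.
-/

open Filter Finset Topology

namespace Fin

theorem sum_pi_insertNth {M : Type*} [AddCommMonoid M] {n : ℕ} {α : Type*} [Fintype α]
    (k : Fin (n + 1)) (g : (Fin (n + 1) → α) → M) :
    ∑ idx, g idx = ∑ p : Fin n → α, ∑ i : α, g (k.insertNth i p) := by
  rw [← (insertNthEquiv (fun _ => α) k).sum_comp g, Fintype.sum_prod_type_right]
  rfl

end Fin

namespace MDMA

variable {X R : Type*} [CommSemiring R] {n m : ℕ}

/-- The paper's `F_{A,Φ}`. -/
def cdf (A : (Fin n → Fin m) → R) (φ : Fin m → Fin n → X → R) (x : Fin n → X) : R :=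
  ∑ idx, A idx * ∏ j, φ (idx j) j (x j)

def marginalTensor (k : Fin (n + 1)) (A : (Fin (n + 1) → Fin m) → R) (idx : Fin n → Fin m) :
    R :=
  ∑ i, A (k.insertNth i idx)

theorem marginalTensor_nonneg [PartialOrder R] [IsOrderedRing R] (k : Fin (n + 1))
    {A : (Fin (n + 1) → Fin m) → R} (hA : ∀ idx, 0 ≤ A idx) (idx : Fin n → Fin m) :
    0 ≤ marginalTensor k A idx :=
  sum_nonneg fun _ _ => hA _

theorem sum_marginalTensor (k : Fin (n + 1)) (A : (Fin (n + 1) → Fin m) → R) :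
    ∑ idx, marginalTensor k A idx = ∑ idx, A idx :=
  (Fin.sum_pi_insertNth k A).symm

theorem cdf_insertNth (A : (Fin (n + 1) → Fin m) → R) (φ : Fin m → Fin (n + 1) → X → R)
    (k : Fin (n + 1)) (t : X) (x : Fin n → X) :
    cdf A φ (k.insertNth t x) =
      ∑ idx, (A idx * ∏ j, φ (idx (k.succAbove j)) (k.succAbove j) (x j)) * φ (idx k) k t := by
  refine sum_congr rfl fun idx _ => ?_
  rw [Fin.prod_univ_succAbove _ k, Fin.insertNth_apply_same]
  simp only [Fin.insertNth_apply_succAbove]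
  ring

theorem cdf_marginalTensor (A : (Fin (n + 1) → Fin m) → R)
    (φ : Fin m → Fin (n + 1) → X → R) (k : Fin (n + 1)) (x : Fin n → X) :
    cdf (marginalTensor k A) (fun i j => φ i (k.succAbove j)) x =
      ∑ idx, A idx * ∏ j, φ (idx (k.succAbove j)) (k.succAbove j) (x j) := by
  rw [Fin.sum_pi_insertNth k]
  refine sum_congr rfl fun p _ => ?_
  simp only [marginalTensor, sum_mul, Fin.insertNth_apply_succAbove]

theorem tendsto_cdf_insertNth_atTop [TopologicalSpace R] [IsTopologicalSemiring R]
    (A : (Fin (n + 1) → Fin m) → R) (φ : Fin m → Fin (n + 1) → X → R)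
    (k : Fin (n + 1)) {l : Filter X} (hφ : ∀ i, Tendsto (φ i k) l (𝓝 1)) (x : Fin n → X) :
    Tendsto (fun t => cdf A φ (k.insertNth t x)) l
      (𝓝 (cdf (marginalTensor k A) (fun i j => φ i (k.succAbove j)) x)) := by
  simp only [cdf_insertNth, cdf_marginalTensor]
  exact tendsto_finsetSum _ fun idx _ => by simpa only [mul_one] using (hφ (idx k)).const_mul _

end MDMA

open MDMA in
theorem stmt_4_general (d m : ℕ) (A : (Fin (d + 1) → Fin m) → ℝ)
    (hA0 : ∀ idx, 0 ≤ A idx) (hA1 : ∑ idx, A idx = 1)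
    (φ : Fin m → Fin (d + 1) → ℝ → ℝ)
    (htop : ∀ i j, Tendsto (φ i j) atTop (nhds 1))
    (F : (Fin (d + 1) → ℝ) → ℝ)
    (hF : ∀ x, F x = ∑ idx, A idx * ∏ j, φ (idx j) j (x j))
    (k : Fin (d + 1))
    (A' : (Fin d → Fin m) → ℝ)
    (hA' : ∀ idx, A' idx = ∑ i : Fin m, A (k.insertNth i idx)) :
    (∀ idx, 0 ≤ A' idx) ∧ (∑ idx, A' idx = 1) ∧
    ∀ x : Fin d → ℝ,
      Tendsto (fun t => F (k.insertNth t x)) atTop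
        (nhds (∑ idx, A' idx * ∏ j, φ (idx j) (k.succAbove j) (x j))) := by
  obtain rfl : A' = marginalTensor k A := funext hA'
  obtain rfl : F = cdf A φ := funext hF
  exact ⟨marginalTensor_nonneg k hA0, (sum_marginalTensor k A).trans hA1,
    tendsto_cdf_insertNth_atTop A φ k fun i => htop i k⟩

/-- Marginalizing an MDMA over any coordinate yields an MDMA in the remaining variables
whose tensor is obtained by summing over the corresponding index of `A`; moreover that
tensor again has nonnegative entries summing to 1 (i.e. lies in `𝒜_{d,m}`). -/
theorem stmt_4 (d m : ℕ) (A : (Fin (d + 1) → Fin m) → ℝ)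
    (hA0 : ∀ idx, 0 ≤ A idx) (hA1 : ∑ idx, A idx = 1)
    (φ : Fin m → Fin (d + 1) → ℝ → ℝ)
    (hmono : ∀ i j, Monotone (φ i j))
    (hbot : ∀ i j, Tendsto (φ i j) atBot (nhds 0))
    (htop : ∀ i j, Tendsto (φ i j) atTop (nhds 1))
    (F : (Fin (d + 1) → ℝ) → ℝ)
    (hF : ∀ x, F x = ∑ idx, A idx * ∏ j, φ (idx j) j (x j))
    (k : Fin (d + 1))
    (A' : (Fin d → Fin m) → ℝ)
    (hA' : ∀ idx, A' idx = ∑ i : Fin m, A (k.insertNth i idx)) :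
    (∀ idx, 0 ≤ A' idx) ∧ (∑ idx, A' idx = 1) ∧
    ∀ x : Fin d → ℝ,
      Tendsto (fun t => F (k.insertNth t x)) atTop
        (nhds (∑ idx, A' idx * ∏ j, φ (idx j) (k.succAbove j) (x j))) :=
  stmt_4_general d m A hA0 hA1 φ htop F hF k A' hA'
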